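/- Let B₁,…,B_r ∈ ℂ[x₁,…,x_r] be such that each B_i involves only the variables x₁,…,x_i, let p₁,…,p_r be positive integers, and let a = (a₁,…,a_r) ∈ ℂ^r satisfy B_i(a) = 0 and (∂B_i/∂x_i)(a) ≠ 0 for every i. Let I be the ideal generated by B₁^{p₁},…,B_r^{p_r}. Then the dual space D_a(I) of I at a is a ℂ-vector space of dimension exactly p₁·p₂·⋯·p_r. -/

import Mathlib

open MvPolynomial

/-- The iterated partial derivative `∂^{j₁+⋯+j_r}F/∂x₁^{j₁}⋯∂x_r^{j_r}`
of a multivariate polynomial `F`, for a multi-index `j`. -/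
noncomputable def iterDeriv {r : ℕ} (j : Fin r → ℕ) (F : MvPolynomial (Fin r) ℂ) :
    MvPolynomial (Fin r) ℂ :=
  (List.finRange r).foldr (fun i G => (⇑(pderiv i))^[j i] G) F

/-- The differential functional `∂_j[a]`, sending `F` to
`(1/(j₁!⋯j_r!)) ⬝ (∂^{j₁+⋯+j_r}F/∂x₁^{j₁}⋯∂x_r^{j_r})(a)`. -/
noncomputable def diffFunc {r : ℕ} (a : Fin r → ℂ) (j : Fin r → ℕ)
    (F : MvPolynomial (Fin r) ℂ) : ℂ :=
  (∏ i, (Nat.factorial (j i) : ℂ))⁻¹ * eval a (iterDeriv j F)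

/-- The dual space `D_a(I)` of an ideal `I` at a point `a`: the `ℂ`-vector space of
all finitely supported families `c : ℕ^r → ℂ` such that `Σ_j c_j ∂_j[a](F) = 0`
for every `F ∈ I`. -/
noncomputable def dualSpace {r : ℕ} (a : Fin r → ℂ) (I : Ideal (MvPolynomial (Fin r) ℂ)) :
    Submodule ℂ ((Fin r → ℕ) →₀ ℂ) where
  carrier := {c | ∀ F ∈ I, (c.sum fun j cj => cj * diffFunc a j F) = 0}
  zero_mem' := by
    intro F _
    simp
  add_mem' := by
    intro c d hc hd F hF
    rw [Finsupp.sum_add_index' (h := fun j cj => cj * diffFunc a j F)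
        (fun j => zero_mul _) (fun j b₁ b₂ => add_mul b₁ b₂ _),
      hc F hF, hd F hF, add_zero]
  smul_mem' := by
    intro s c hc F hF
    rw [Finsupp.sum_smul_index (h := fun j cj => cj * diffFunc a j F) (fun j => zero_mul _)]
    have h : (c.sum fun j b => s * b * diffFunc a j F)
        = s * c.sum fun j b => b * diffFunc a j F := by
      rw [Finsupp.mul_sum]
      exact Finsupp.sum_congr fun j _ => by ring
    rw [h, hc F hF, mul_zero]

namespace DualProof

variable {r : ℕ}

local notation "Pr" => MvPolynomial (Fin r) ℂ
local notation "Vr" => ((Fin r → ℕ) →₀ ℂ)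

noncomputable def toF (j : Fin r → ℕ) : Fin r →₀ ℕ := Finsupp.equivFunOnFinite.symm j

lemma toF_apply (j : Fin r → ℕ) (i : Fin r) : toF j i = j i := rfl

lemma toF_inj : Function.Injective (toF (r := r)) := Equiv.injective _

lemma degree_toF (m : Fin r → ℕ) : (toF m).degree = ∑ i, m i := by
  rw [Finsupp.degree]
  refine Finset.sum_subset (Finset.subset_univ _) ?_
  intro i _ hi
  simpa [toF_apply] using Finsupp.notMem_support_iff.mp hi

lemma degree_add (a b : Fin r →₀ ℕ) : (a + b).degree = a.degree + b.degree := by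
  simp [Finsupp.degree_eq_weight_one, map_add]

/-- pairing between finitely supported families and polynomials -/
noncomputable def pair (c : Vr) (F : Pr) : ℂ := c.sum fun j cj => cj * coeff (toF j) F

lemma pair_eq (c : Vr) (F : Pr) : pair c F = ∑ j ∈ c.support, c j * coeff (toF j) F := rfl

lemma pair_add (c : Vr) (F G : Pr) : pair c (F + G) = pair c F + pair c G := by
  simp [pair_eq, coeff_add, mul_add, Finset.sum_add_distrib]

lemma pair_smul (c : Vr) (s : ℂ) (F : Pr) : pair c (s • F) = s * pair c F := by
  simp only [pair_eq, Finset.mul_sum, MvPolynomial.coeff_smul, smul_eq_mul]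
  exact Finset.sum_congr rfl fun j _ => by ring

lemma pair_zero (c : Vr) : pair c (0 : Pr) = 0 := by simp [pair_eq]

lemma pair_monomial (c : Vr) (d : Fin r →₀ ℕ) :
    pair c (monomial d 1) = c (Finsupp.equivFunOnFinite d) := by
  rw [pair_eq]
  rw [Finset.sum_eq_single (Finsupp.equivFunOnFinite d)]
  · rw [coeff_monomial, if_pos, mul_one]
    simp [toF]
  · intro j _ hj
    rw [coeff_monomial, if_neg, mul_zero]
    intro h
    apply hj
    rw [h]; simp [toF]
  · intro h
    rw [Finsupp.notMem_support_iff.mp h, zero_mul]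

/-- if c pairs to zero with everything it's zero -/
lemma eq_zero_of_pair (c : Vr) (h : ∀ F : Pr, pair c F = 0) : c = 0 := by
  ext j
  have := h (monomial (toF j) 1)
  rw [pair_monomial] at this
  simpa [toF] using this

/-- the span of monomials of degree at least N -/
noncomputable def mPow (r N : ℕ) : Submodule ℂ (MvPolynomial (Fin r) ℂ) where
  carrier := {F | ∀ d ∈ F.support, N ≤ d.degree}
  zero_mem' := by simp
  add_mem' := by
    intro F G hF hG d hd
    rcases Finset.mem_union.mp (MvPolynomial.support_add hd) with h | h
    · exact hF d h
    · exact hG d h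
  smul_mem' := by
    intro s F hF d hd
    exact hF d (MvPolynomial.support_smul hd)

lemma mPow_anti {M N : ℕ} (h : M ≤ N) : mPow r N ≤ mPow r M := by
  intro F hF d hd
  exact le_trans h (hF d hd)

lemma mPow_zero_top : mPow r 0 = ⊤ := by
  ext F; simp [mPow]

lemma coeff_eq_zero_of_mPow {N : ℕ} {F : Pr} (hF : F ∈ mPow r N) {d : Fin r →₀ ℕ}
    (hd : d.degree < N) : coeff d F = 0 := by
  by_contra h
  exact absurd (hF d (MvPolynomial.mem_support_iff.mpr h)) (by omega)

lemma mul_mem_mPow {M N : ℕ} {F G : Pr} (hF : F ∈ mPow r M) (hG : G ∈ mPow r N) :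
    F * G ∈ mPow r (M + N) := by
  classical
  intro d hd
  rcases Finset.mem_add.mp (MvPolynomial.support_mul F G hd) with ⟨d1, h1, d2, h2, rfl⟩
  rw [degree_add]
  exact Nat.add_le_add (hF d1 h1) (hG d2 h2)

lemma monomial_mem_mPow {d : Fin r →₀ ℕ} (γ : ℂ) : monomial d γ ∈ mPow r d.degree := by
  intro e he
  rw [Finset.mem_singleton.mp (MvPolynomial.support_monomial_subset he)]

lemma pair_eq_zero_of_mPow {c : Vr} {N : ℕ} (hc : ∀ j ∈ c.support, (toF j).degree < N)
    {F : Pr} (hF : F ∈ mPow r N) : pair c F = 0 := by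
  rw [pair_eq]
  refine Finset.sum_eq_zero fun j hj => ?_
  rw [coeff_eq_zero_of_mPow hF (hc j hj), mul_zero]


/-! ### Taylor coefficients via iterated derivatives -/

lemma coeff_pderiv (i : Fin r) (F : Pr) (d : Fin r →₀ ℕ) :
    coeff d (pderiv i F) = ((d i + 1 : ℕ) : ℂ) * coeff (d + Finsupp.single i 1) F := by
  induction F using MvPolynomial.induction_on' with
  | monomial s a =>
    rw [pderiv_monomial, coeff_monomial, coeff_monomial]
    by_cases h : s = d + Finsupp.single i 1
    · subst h
      rw [if_pos (add_tsub_cancel_right _ _), if_pos rfl]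
      have : (d + Finsupp.single i 1 : Fin r →₀ ℕ) i = d i + 1 := by simp
      rw [this]
      push_cast
      ring
    · rw [if_neg h, mul_zero]
      by_cases hs : s - Finsupp.single i 1 = d
      · rw [if_pos hs]
        have hsi : s i = 0 := by
          by_contra hsi
          apply h
          have h1 : Finsupp.single i 1 ≤ s := by
            rw [Finsupp.single_le_iff]; omega
          rw [← hs, tsub_add_cancel_of_le h1]
        rw [hsi]; simp
      · rw [if_neg hs]
  | add F G hF hG =>
    simp only [map_add, coeff_add, hF, hG]
    ring

lemma coeff_pderiv_iterate (i : Fin r) (n : ℕ) (F : Pr) (d : Fin r →₀ ℕ) :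
    coeff d ((⇑(pderiv i))^[n] F)
      = ((∏ k ∈ Finset.range n, (d i + 1 + k) : ℕ) : ℂ)
        * coeff (d + Finsupp.single i n) F := by
  induction n generalizing F with
  | zero => simp
  | succ n ih =>
    rw [Function.iterate_succ_apply, ih (pderiv i F), coeff_pderiv]
    have h1 : (d + Finsupp.single i n : Fin r →₀ ℕ) i = d i + n := by simp
    have h2 : d + Finsupp.single i n + Finsupp.single i 1 = d + Finsupp.single i (n + 1) := by
      rw [add_assoc, ← Finsupp.single_add]
    rw [h1, h2, Finset.prod_range_succ]
    push_cast
    ring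

lemma coeff_foldr (j : Fin r → ℕ) (l : List (Fin r)) (hl : l.Nodup) (F : Pr) (d : Fin r →₀ ℕ) :
    coeff d (l.foldr (fun i G => (⇑(pderiv i))^[j i] G) F)
      = (((l.map fun i => ∏ k ∈ Finset.range (j i), (d i + 1 + k)).prod : ℕ) : ℂ)
        * coeff (d + (l.map fun i => Finsupp.single i (j i)).sum) F := by
  induction l generalizing d with
  | nil => simp
  | cons i t ih =>
    have hni : i ∉ t := (List.nodup_cons.mp hl).1
    have hnd : t.Nodup := (List.nodup_cons.mp hl).2
    rw [List.foldr_cons, coeff_pderiv_iterate, ih hnd (d + Finsupp.single i (j i))]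
    have hmap : (t.map fun i' => ∏ k ∈ Finset.range (j i'), ((d + Finsupp.single i (j i)) i' + 1 + k))
        = t.map fun i' => ∏ k ∈ Finset.range (j i'), (d i' + 1 + k) := by
      refine List.map_congr_left fun i' hi' => ?_
      have : (d + Finsupp.single i (j i) : Fin r →₀ ℕ) i' = d i' := by
        have : i' ≠ i := fun h => hni (h ▸ hi')
        simp [Finsupp.single_apply, this.symm]
      rw [this]
    rw [hmap]
    simp only [List.map_cons, List.prod_cons, List.sum_cons, add_assoc]
    push_cast
    ring

lemma sum_single_eq_toF (j : Fin r → ℕ) :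
    ((List.finRange r).map fun i => Finsupp.single i (j i)).sum = toF j := by
  rw [← Fin.sum_univ_def]
  ext k
  rw [Finsupp.finset_sum_apply]
  simp [Finsupp.single_apply, Finset.sum_ite_eq' Finset.univ]
  rfl

lemma eval_zero_iterDeriv (j : Fin r → ℕ) (F : Pr) :
    eval (0 : Fin r → ℂ) (iterDeriv j F)
      = ((∏ i, (j i).factorial : ℕ) : ℂ) * coeff (toF j) F := by
  have h0 : eval (0 : Fin r → ℂ) (iterDeriv j F) = coeff 0 (iterDeriv j F) := by
    rw [eval_zero]; rfl
  rw [h0, iterDeriv, coeff_foldr j _ (List.nodup_finRange r) F 0, sum_single_eq_toF, zero_add]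
  congr 2
  rw [Fin.prod_univ_def]
  congr 1
  refine List.map_congr_left fun i _ => ?_
  simp only [Finsupp.coe_zero, Pi.zero_apply, zero_add]
  exact (Finset.prod_congr rfl fun x _ => Nat.add_comm 1 x).trans
    (Finset.prod_range_add_one_eq_factorial (j i))

lemma diffFunc_zero_eq_coeff (j : Fin r → ℕ) (F : Pr) :
    diffFunc 0 j F = coeff (toF j) F := by
  rw [diffFunc, eval_zero_iterDeriv]
  push_cast
  rw [inv_mul_cancel_left₀]
  exact Finset.prod_ne_zero_iff.mpr fun i _ => Nat.cast_ne_zero.mpr (j i).factorial_ne_zero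

/-! ### Translation -/

noncomputable def τ (a : Fin r → ℂ) : MvPolynomial (Fin r) ℂ →ₐ[ℂ] MvPolynomial (Fin r) ℂ :=
  aeval fun i => X i + C (a i)

lemma τ_comp (a b : Fin r → ℂ) : (τ a).comp (τ b) = τ (a + b) := by
  apply MvPolynomial.algHom_ext
  intro i
  simp [τ, map_add, add_assoc]

lemma τ_zero : τ (0 : Fin r → ℂ) = AlgHom.id ℂ _ := by
  apply MvPolynomial.algHom_ext
  intro i
  simp [τ]

lemma τ_surjective (a : Fin r → ℂ) : Function.Surjective (τ a) := by
  intro F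
  refine ⟨τ (-a) F, ?_⟩
  rw [← AlgHom.comp_apply, τ_comp]
  simp [τ_zero]

lemma pderiv_τ (a : Fin r → ℂ) (i : Fin r) (F : Pr) :
    pderiv i (τ a F) = τ a (pderiv i F) := by
  induction F using MvPolynomial.induction_on with
  | C c => simp [τ]
  | add F G hF hG => simp [map_add, hF, hG]
  | mul_X F n ih =>
    rw [map_mul, pderiv_mul, pderiv_mul, map_add, map_mul, map_mul, ih]
    congr 1
    by_cases h : n = i
    · subst h
      have h1 : (pderiv n) (τ a (X n)) = 1 := by simp [τ, pderiv_X_self]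
      rw [h1, pderiv_X_self, map_one]
    · have h1 : (pderiv i) (τ a (X n)) = 0 := by simp [τ, pderiv_X, Pi.single_apply, h]
      have h2 : (pderiv i) (X n : Pr) = 0 := by simp [pderiv_X, Pi.single_apply, h]
      rw [h1, h2, map_zero]

lemma eval_zero_τ (a : Fin r → ℂ) (F : Pr) :
    eval (0 : Fin r → ℂ) (τ a F) = eval a F := by
  have h1 : ∀ (g : Fin r → ℂ) (G : Pr), eval g G = aeval g G := by
    intro g G
    rw [← MvPolynomial.coe_aeval_eq_eval]
    rfl
  rw [h1, h1, τ, ← AlgHom.comp_apply, MvPolynomial.comp_aeval]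
  have h2 : (aeval fun i => (aeval (0 : Fin r → ℂ)) (X i + C (a i))) = aeval (R := ℂ) a := by
    apply MvPolynomial.algHom_ext
    intro i
    simp
  rw [h2]

lemma τ_iterate_pderiv (a : Fin r → ℂ) (i : Fin r) (n : ℕ) (F : Pr) :
    τ a ((⇑(pderiv i))^[n] F) = (⇑(pderiv i))^[n] (τ a F) := by
  induction n generalizing F with
  | zero => rfl
  | succ n ih =>
    rw [Function.iterate_succ_apply, Function.iterate_succ_apply, ih, pderiv_τ]

lemma τ_iterDeriv (a : Fin r → ℂ) (j : Fin r → ℕ) (F : Pr) :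
    τ a (iterDeriv j F) = iterDeriv j (τ a F) := by
  rw [iterDeriv, iterDeriv]
  induction (List.finRange r) generalizing F with
  | nil => rfl
  | cons i t ih =>
    rw [List.foldr_cons, List.foldr_cons, τ_iterate_pderiv, ih]

lemma diffFunc_eq_coeff_τ (a : Fin r → ℂ) (j : Fin r → ℕ) (F : Pr) :
    diffFunc a j F = coeff (toF j) (τ a F) := by
  rw [← diffFunc_zero_eq_coeff, diffFunc, diffFunc, ← τ_iterDeriv, eval_zero_τ]

/-! ### Core setup -/

section Core

variable (Q : Fin r → MvPolynomial (Fin r) ℂ)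

/-- matrix of linear coefficients -/
noncomputable def Lam (i j : Fin r) : ℂ := coeff (Finsupp.single j 1) (Q i)

/-- linear part -/
noncomputable def Lin (i : Fin r) : Pr := ∑ j, MvPolynomial.C (Lam Q i j) * X j

noncomputable def Qprod (m : Fin r → ℕ) : Pr := ∏ i, Q i ^ m i

noncomputable def Lprod (m : Fin r → ℕ) : Pr := ∏ i, Lin Q i ^ m i

def degm (m : Fin r → ℕ) : ℕ := ∑ i, m i

lemma degm_toF (m : Fin r → ℕ) : (toF m).degree = degm m := degree_toF m

lemma degm_coe (d : Fin r →₀ ℕ) : degm (Finsupp.equivFunOnFinite d) = d.degree := by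
  have : toF (Finsupp.equivFunOnFinite d) = d := Finsupp.equivFunOnFinite.symm_apply_apply d
  rw [← degm_toF, this]

lemma degm_add (m m' : Fin r → ℕ) : degm (m + m') = degm m + degm m' := by
  simp [degm, Finset.sum_add_distrib]

/-- an exponent function supported at one point -/
def en (i : Fin r) (n : ℕ) : Fin r → ℕ := fun j => if j = i then n else 0

lemma degm_en (i : Fin r) (n : ℕ) : degm (en i n) = n := by
  simp [degm, en]

lemma degree_eq_one {d : Fin r →₀ ℕ} (hd : d.degree = 1) : ∃ k, d = Finsupp.single k 1 := by
  have hne : d.support.Nonempty := by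
    by_contra h
    rw [Finset.not_nonempty_iff_eq_empty] at h
    rw [Finsupp.degree_apply, h] at hd
    simp at hd
  obtain ⟨k, hk⟩ := hne
  have hdk : 1 ≤ d k := Nat.one_le_iff_ne_zero.mpr (Finsupp.mem_support_iff.mp hk)
  have hsum : ∑ x ∈ d.support.erase k, d x + d k = d.degree := Finset.sum_erase_add _ _ hk
  have h0 : ∑ x ∈ d.support.erase k, d x = 0 ∧ d k = 1 := by omega
  refine ⟨k, Finsupp.ext fun j => ?_⟩
  rcases eq_or_ne j k with rfl | hj
  · simp [h0.2]
  · rw [Finsupp.single_apply, if_neg (Ne.symm hj)]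
    by_contra hdj
    have hjs : j ∈ d.support.erase k := Finset.mem_erase.mpr ⟨hj, Finsupp.mem_support_iff.mpr hdj⟩
    have := (Finset.sum_eq_zero_iff.mp h0.1) j hjs
    exact hdj this

lemma coeff_Lin (d : Fin r →₀ ℕ) (i : Fin r) :
    coeff d (Lin Q i) = ∑ j, Lam Q i j * coeff d (X j : Pr) := by
  rw [Lin, MvPolynomial.coeff_sum]
  exact Finset.sum_congr rfl fun j _ => by rw [coeff_C_mul]

lemma coeff_zero_Lin (i : Fin r) : coeff 0 (Lin Q i) = 0 := by
  rw [coeff_Lin]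
  refine Finset.sum_eq_zero fun j _ => ?_
  rw [coeff_X', if_neg, mul_zero]
  intro h
  have := congrArg (fun e : Fin r →₀ ℕ => e j) h
  simp at this

lemma coeff_single_Lin (i k : Fin r) :
    coeff (Finsupp.single k 1) (Lin Q i) = Lam Q i k := by
  rw [coeff_Lin]
  rw [Finset.sum_eq_single k]
  · rw [coeff_X', if_pos rfl, mul_one]
  · intro j _ hj
    rw [coeff_X', if_neg, mul_zero]
    intro h
    exact hj (Finsupp.single_left_injective (α := Fin r) (one_ne_zero (α := ℕ)) h)
  · intro h
    exact absurd (Finset.mem_univ k) h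

lemma Lin_isHomogeneous (i : Fin r) : (Lin Q i).IsHomogeneous 1 := by
  have h : Lin Q i ∈ homogeneousSubmodule (Fin r) ℂ 1 := by
    rw [Lin]
    apply Submodule.sum_mem
    intro j _
    rw [show (MvPolynomial.C (Lam Q i j) * X j : Pr) = Lam Q i j • X j from
      (MvPolynomial.smul_eq_C_mul _ _).symm]
    exact Submodule.smul_mem _ _ ((mem_homogeneousSubmodule _ _).mpr (isHomogeneous_X ℂ j))
  exact (mem_homogeneousSubmodule _ _).mp h

lemma Lin_mem_mPow (i : Fin r) : Lin Q i ∈ mPow r 1 := by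
  intro d hd
  by_contra h
  have hd0 : d.degree = 0 := by omega
  rw [Finsupp.degree_eq_zero_iff] at hd0
  subst hd0
  exact MvPolynomial.mem_support_iff.mp hd (coeff_zero_Lin Q i)

lemma Q_mem_mPow (hQ0 : ∀ i, coeff 0 (Q i) = 0) (i : Fin r) : Q i ∈ mPow r 1 := by
  intro d hd
  by_contra h
  have hd0 : d.degree = 0 := by omega
  rw [Finsupp.degree_eq_zero_iff] at hd0
  subst hd0
  exact MvPolynomial.mem_support_iff.mp hd (hQ0 i)

lemma Q_sub_Lin (hQ0 : ∀ i, coeff 0 (Q i) = 0) (i : Fin r) : Q i - Lin Q i ∈ mPow r 2 := by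
  intro d hd
  by_contra h
  have hd1 : d.degree = 0 ∨ d.degree = 1 := by omega
  apply MvPolynomial.mem_support_iff.mp hd
  rcases hd1 with h0 | h1
  · rw [Finsupp.degree_eq_zero_iff] at h0
    subst h0
    rw [coeff_sub, hQ0 i, coeff_zero_Lin, sub_zero]
  · obtain ⟨k, rfl⟩ := degree_eq_one h1
    rw [coeff_sub, coeff_single_Lin, Lam, sub_self]

lemma pow_mem_mPow {F : Pr} (hF : F ∈ mPow r 1) (n : ℕ) : F ^ n ∈ mPow r n := by
  induction n with
  | zero => rw [pow_zero]; exact fun d hd => Nat.zero_le _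
  | succ n ih =>
    rw [pow_succ]
    exact mul_mem_mPow ih hF

lemma prod_pow_mem_mPow (G : Fin r → Pr) (hG : ∀ i, G i ∈ mPow r 1) (m : Fin r → ℕ)
    (s : Finset (Fin r)) : ∏ x ∈ s, G x ^ m x ∈ mPow r (∑ x ∈ s, m x) := by
  classical
  induction s using Finset.induction_on with
  | empty => rw [Finset.prod_empty]; exact fun d hd => by simp
  | @insert i s hni ih =>
    rw [Finset.prod_insert hni, Finset.sum_insert hni]
    exact mul_mem_mPow (pow_mem_mPow (hG i) (m i)) ih

lemma Qprod_mem_mPow (hQ0 : ∀ i, coeff 0 (Q i) = 0) (m : Fin r → ℕ) :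
    Qprod Q m ∈ mPow r (degm m) :=
  prod_pow_mem_mPow (Q) (Q_mem_mPow Q hQ0) m Finset.univ

lemma Lprod_mem_mPow (m : Fin r → ℕ) : Lprod Q m ∈ mPow r (degm m) :=
  prod_pow_mem_mPow (Lin Q) (Lin_mem_mPow Q) m Finset.univ

lemma Lprod_isHomogeneous (m : Fin r → ℕ) : (Lprod Q m).IsHomogeneous (degm m) := by
  rw [Lprod, degm]
  exact MvPolynomial.IsHomogeneous.prod _ _ _ fun i _ => by
    simpa using (Lin_isHomogeneous Q i).pow (m i)

lemma pow_sub_pow_mem {F G : Pr} (hF : F ∈ mPow r 1) (hG : G ∈ mPow r 1)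
    (hFG : F - G ∈ mPow r 2) (n : ℕ) : F ^ n - G ^ n ∈ mPow r (n + 1) := by
  induction n with
  | zero => simpa using Submodule.zero_mem _
  | succ n ih =>
    have key : F ^ (n+1) - G ^ (n+1) = F * (F ^ n - G ^ n) + (F - G) * G ^ n := by ring
    rw [key]
    refine Submodule.add_mem _ ?_ ?_
    · exact mPow_anti (by omega) (mul_mem_mPow hF ih)
    · exact mPow_anti (by omega) (mul_mem_mPow hFG (pow_mem_mPow hG n))

lemma Qprod_sub_Lprod (hQ0 : ∀ i, coeff 0 (Q i) = 0) (m : Fin r → ℕ) :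
    Qprod Q m - Lprod Q m ∈ mPow r (degm m + 1) := by
  rw [Qprod, Lprod, degm]
  have main : ∀ s : Finset (Fin r),
      ∏ x ∈ s, Q x ^ m x - ∏ x ∈ s, Lin Q x ^ m x ∈ mPow r ((∑ x ∈ s, m x) + 1) := by
    intro s
    classical
    induction s using Finset.induction_on with
    | empty => simpa using Submodule.zero_mem _
    | @insert i s hni ih =>
      rw [Finset.prod_insert hni, Finset.prod_insert hni, Finset.sum_insert hni]
      have key : Q i ^ m i * ∏ x ∈ s, Q x ^ m x - Lin Q i ^ m i * ∏ x ∈ s, Lin Q x ^ m x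
          = Q i ^ m i * (∏ x ∈ s, Q x ^ m x - ∏ x ∈ s, Lin Q x ^ m x)
            + (Q i ^ m i - Lin Q i ^ m i) * ∏ x ∈ s, Lin Q x ^ m x := by ring
      rw [key]
      refine Submodule.add_mem _ ?_ ?_
      · exact mPow_anti (by omega)
          (mul_mem_mPow (pow_mem_mPow (Q_mem_mPow Q hQ0 i) (m i)) ih)
      · exact mPow_anti (by omega)
          (mul_mem_mPow
            (pow_sub_pow_mem (Q_mem_mPow Q hQ0 i) (Lin_mem_mPow Q i) (Q_sub_Lin Q hQ0 i) (m i))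
            (prod_pow_mem_mPow (Lin Q) (Lin_mem_mPow Q) m s))
  exact main Finset.univ

lemma Qprod_mul (m m' : Fin r → ℕ) : Qprod Q m * Qprod Q m' = Qprod Q (m + m') := by
  rw [Qprod, Qprod, Qprod, ← Finset.prod_mul_distrib]
  exact Finset.prod_congr rfl fun i _ => by rw [Pi.add_apply, pow_add]

lemma Qprod_en (i : Fin r) (n : ℕ) : Qprod Q (en i n) = Q i ^ n := by
  rw [Qprod]
  rw [Finset.prod_eq_single i]
  · simp [en]
  · intro j _ hj
    simp [en, hj]
  · intro h
    exact absurd (Finset.mem_univ i) h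

end Core

/-! ### Matrix inversion and the substitution endomorphisms -/

section Core2

variable (Q : Fin r → MvPolynomial (Fin r) ℂ)

noncomputable def Lmat : Matrix (Fin r) (Fin r) ℂ := Matrix.of fun i j => Lam Q i j

lemma Lprod_mul (m m' : Fin r → ℕ) : Lprod Q m * Lprod Q m' = Lprod Q (m + m') := by
  rw [Lprod, Lprod, Lprod, ← Finset.prod_mul_distrib]
  exact Finset.prod_congr rfl fun i _ => by rw [Pi.add_apply, pow_add]

lemma Lprod_en (i : Fin r) (n : ℕ) : Lprod Q (en i n) = Lin Q i ^ n := by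
  rw [Lprod]
  rw [Finset.prod_eq_single i]
  · simp [en]
  · intro j _ hj
    simp [en, hj]
  · intro h
    exact absurd (Finset.mem_univ i) h

lemma Lmat_det (hdiag : ∀ i, Lam Q i i ≠ 0) (htri : ∀ i j : Fin r, i < j → Lam Q i j = 0) :
    IsUnit (Lmat Q).det := by
  have hbt : (Lmat Q).BlockTriangular OrderDual.toDual := by
    intro i j h
    exact htri i j h
  rw [Matrix.det_of_lowerTriangular _ hbt]
  rw [isUnit_iff_ne_zero]
  exact Finset.prod_ne_zero_iff.mpr fun i _ => hdiag i

lemma X_eq_comb (hdiag : ∀ i, Lam Q i i ≠ 0) (htri : ∀ i j : Fin r, i < j → Lam Q i j = 0)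
    (k : Fin r) : (X k : Pr) = ∑ j, MvPolynomial.C ((Lmat Q)⁻¹ k j) * Lin Q j := by
  have hinv : (Lmat Q)⁻¹ * Lmat Q = 1 := Matrix.nonsing_inv_mul _ (Lmat_det Q hdiag htri)
  have h1 : ∀ j, MvPolynomial.C ((Lmat Q)⁻¹ k j) * Lin Q j
      = ∑ l, MvPolynomial.C ((Lmat Q)⁻¹ k j * Lam Q j l) * X l := by
    intro j
    rw [Lin, Finset.mul_sum]
    exact Finset.sum_congr rfl fun l _ => by rw [map_mul, mul_assoc]
  rw [Finset.sum_congr rfl fun j _ => h1 j, Finset.sum_comm]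
  have h2 : ∀ l, (∑ j, MvPolynomial.C ((Lmat Q)⁻¹ k j * Lam Q j l) * X l)
      = MvPolynomial.C (((Lmat Q)⁻¹ * Lmat Q) k l) * X l := by
    intro l
    rw [Matrix.mul_apply, map_sum, Finset.sum_mul]
    rfl
  rw [Finset.sum_congr rfl fun l _ => h2 l, hinv]
  rw [Finset.sum_eq_single k]
  · rw [Matrix.one_apply_eq, map_one, one_mul]
  · intro l _ hl
    rw [Matrix.one_apply_ne (Ne.symm hl), map_zero, zero_mul]
  · intro h
    exact absurd (Finset.mem_univ k) h

noncomputable def Psolve (k : Fin r) : Pr := ∑ l, MvPolynomial.C ((Lmat Q)⁻¹ k l) * X l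

lemma aeval_Psolve_Lin (hdiag : ∀ i, Lam Q i i ≠ 0) (htri : ∀ i j : Fin r, i < j → Lam Q i j = 0)
    (i : Fin r) : aeval (Psolve Q) (Lin Q i) = X i := by
  have hinv : Lmat Q * (Lmat Q)⁻¹ = 1 := Matrix.mul_nonsing_inv _ (Lmat_det Q hdiag htri)
  rw [Lin, map_sum]
  have h1 : ∀ j, aeval (Psolve Q) (MvPolynomial.C (Lam Q i j) * X j)
      = ∑ l, MvPolynomial.C (Lam Q i j * (Lmat Q)⁻¹ j l) * X l := by
    intro j
    rw [map_mul, aeval_X, aeval_C, Psolve, Finset.mul_sum]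
    refine Finset.sum_congr rfl fun l _ => ?_
    rw [map_mul]
    rw [MvPolynomial.algebraMap_eq]
    ring
  rw [Finset.sum_congr rfl fun j _ => h1 j, Finset.sum_comm]
  have h2 : ∀ l, (∑ j, MvPolynomial.C (Lam Q i j * (Lmat Q)⁻¹ j l) * X l)
      = MvPolynomial.C ((Lmat Q * (Lmat Q)⁻¹) i l) * X l := by
    intro l
    rw [Matrix.mul_apply, map_sum, Finset.sum_mul]
    rfl
  rw [Finset.sum_congr rfl fun l _ => h2 l, hinv]
  rw [Finset.sum_eq_single i]
  · rw [Matrix.one_apply_eq, map_one, one_mul]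
  · intro l _ hl
    rw [Matrix.one_apply_ne (Ne.symm hl), map_zero, zero_mul]
  · intro h
    exact absurd (Finset.mem_univ i) h

lemma phi_injective (hdiag : ∀ i, Lam Q i i ≠ 0) (htri : ∀ i j : Fin r, i < j → Lam Q i j = 0) :
    Function.Injective (aeval (R := ℂ) (Lin Q)) := by
  have hcomp : (aeval (Psolve Q)).comp (aeval (R := ℂ) (Lin Q)) = AlgHom.id ℂ Pr := by
    apply MvPolynomial.algHom_ext
    intro i
    rw [AlgHom.comp_apply, aeval_X, aeval_Psolve_Lin Q hdiag htri]
    rfl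
  intro F G h
  have h2 := congrArg (aeval (Psolve Q)) h
  rw [← AlgHom.comp_apply, ← AlgHom.comp_apply, hcomp] at h2
  exact h2

lemma phi_monomial (m : Fin r → ℕ) :
    aeval (R := ℂ) (Lin Q) (monomial (toF m) 1) = Lprod Q m := by
  rw [aeval_monomial, map_one, one_mul, Lprod]
  rw [Finsupp.prod_pow]
  rfl

/-! ### Monomials lie in the span of products of the linear parts -/

lemma monomial_mem_span_Lprod (hdiag : ∀ i, Lam Q i i ≠ 0)
    (htri : ∀ i j : Fin r, i < j → Lam Q i j = 0) :
    ∀ (k : ℕ) (d : Fin r →₀ ℕ), d.degree = k →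
      monomial d (1 : ℂ) ∈ Submodule.span ℂ ((fun m => Lprod Q m) '' {m | degm m = k}) := by
  intro k
  induction k with
  | zero =>
    intro d hd
    have hd0 : d = 0 := (Finsupp.degree_eq_zero_iff d).mp hd
    subst hd0
    apply Submodule.subset_span
    refine ⟨fun _ => 0, by simp [degm], ?_⟩
    show Lprod Q (fun _ => 0) = monomial 0 1
    simp [Lprod, MvPolynomial.monomial_zero']
  | succ k ih =>
    intro d hd
    have hne : d ≠ 0 := by
      intro h
      subst h
      simp at hd
    obtain ⟨k0, hk0⟩ := Finsupp.support_nonempty_iff.mpr hne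
    have hle : Finsupp.single k0 1 ≤ d :=
      Finsupp.single_le_iff.mpr (Nat.one_le_iff_ne_zero.mpr (Finsupp.mem_support_iff.mp hk0))
    set d' := d - Finsupp.single k0 1 with hd'def
    have hdd : d' + Finsupp.single k0 1 = d := tsub_add_cancel_of_le hle
    have hdeg1 : (Finsupp.single k0 1 : Fin r →₀ ℕ).degree = 1 := by
      rw [Finsupp.degree_apply, Finsupp.support_single_ne_zero _ one_ne_zero]
      simp
    have hdeg' : d'.degree = k := by
      have h3 := degree_add d' (Finsupp.single k0 1)
      rw [hdd, hd, hdeg1] at h3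
      omega
    have hmono : monomial d (1 : ℂ) = monomial d' 1 * X k0 := by
      rw [MvPolynomial.X, MvPolynomial.monomial_mul, mul_one, hdd]
    rw [hmono]
    have h1 := ih d' hdeg'
    have hX : (X k0 : Pr) ∈ Submodule.span ℂ ((fun m => Lprod Q m) '' {m | degm m = 1}) := by
      rw [X_eq_comb Q hdiag htri k0]
      apply Submodule.sum_mem
      intro j _
      rw [show (MvPolynomial.C ((Lmat Q)⁻¹ k0 j) * Lin Q j : Pr)
          = (Lmat Q)⁻¹ k0 j • Lin Q j from (MvPolynomial.smul_eq_C_mul _ _).symm]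
      apply Submodule.smul_mem
      apply Submodule.subset_span
      refine ⟨en j 1, by simp [degm_en], ?_⟩
      show Lprod Q (en j 1) = Lin Q j
      rw [Lprod_en, pow_one]
    have hmul := Submodule.mul_mem_mul h1 hX
    rw [Submodule.span_mul_span] at hmul
    refine Submodule.span_le.mpr ?_ hmul
    rintro x hx
    rw [Set.mem_mul] at hx
    obtain ⟨u, hu, v, hv, rfl⟩ := hx
    obtain ⟨mu, hmu, rfl⟩ := hu
    obtain ⟨mv, hmv, rfl⟩ := hv
    apply Submodule.subset_span
    refine ⟨mu + mv, ?_, (Lprod_mul Q mu mv).symm⟩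
    simp only [Set.mem_setOf_eq] at hmu hmv ⊢
    rw [degm_add, hmu, hmv]

/-! ### Spanning -/

lemma homComp_eq_zero_of_mPow {M k : ℕ} {F : Pr} (hF : F ∈ mPow r M) (hk : k < M) :
    homogeneousComponent k F = 0 := by
  apply homogeneousComponent_eq_zero'
  intro d hd
  have := hF d hd
  omega

lemma homComp_Qprod (hQ0 : ∀ i, coeff 0 (Q i) = 0) {k : ℕ} {m : Fin r → ℕ} (hm : degm m = k) :
    homogeneousComponent k (Qprod Q m) = Lprod Q m := by
  have hsplit : Qprod Q m = Lprod Q m + (Qprod Q m - Lprod Q m) := by ring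
  rw [hsplit, map_add]
  rw [homComp_eq_zero_of_mPow (Qprod_sub_Lprod Q hQ0 m) (by omega), add_zero]
  have hhom : Lprod Q m ∈ homogeneousSubmodule (Fin r) ℂ k :=
    (mem_homogeneousSubmodule _ _).mpr (hm ▸ Lprod_isHomogeneous Q m)
  rw [homogeneousComponent_of_mem hhom, if_pos rfl]

lemma spanning (hQ0 : ∀ i, coeff 0 (Q i) = 0) (hdiag : ∀ i, Lam Q i i ≠ 0)
    (htri : ∀ i j : Fin r, i < j → Lam Q i j = 0) (N : ℕ) (F : Pr) :
    ∃ G ∈ Submodule.span ℂ ((fun m => Qprod Q m) '' {m | degm m < N}), F - G ∈ mPow r N := by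
  induction N generalizing F with
  | zero => exact ⟨0, Submodule.zero_mem _, fun d hd => Nat.zero_le _⟩
  | succ N ih =>
    obtain ⟨G, hG, hFG⟩ := ih F
    set H := F - G with hHdef
    set h1 := homogeneousComponent N H with hh1
    have hH1 : H - h1 ∈ mPow r (N + 1) := by
      intro d hd
      by_contra hcon
      apply MvPolynomial.mem_support_iff.mp hd
      have hdeg : d.degree ≤ N := by omega
      rw [coeff_sub, hh1, coeff_homogeneousComponent]
      rcases eq_or_lt_of_le hdeg with heq | hlt
      · rw [if_pos heq, sub_self]
      · rw [if_neg (by omega), sub_zero]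
        exact coeff_eq_zero_of_mPow hFG hlt
    -- h1 lies in the span of the Lprods of degree N
    have hspanL : h1 ∈ Submodule.span ℂ ((fun m => Lprod Q m) '' {m | degm m = N}) := by
      rw [← MvPolynomial.support_sum_monomial_coeff h1]
      apply Submodule.sum_mem
      intro d hd
      have hdeg : d.degree = N := by
        have := homogeneousComponent_isHomogeneous N H
        rw [← hh1] at this
        have h2 := this (MvPolynomial.mem_support_iff.mp hd)
        rw [Finsupp.degree_eq_weight_one]
        exact h2
      rw [show (monomial d (coeff d h1) : Pr) = coeff d h1 • monomial d 1 by
        rw [MvPolynomial.smul_monomial, smul_eq_mul, mul_one]]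
      exact Submodule.smul_mem _ _ (monomial_mem_span_Lprod Q hdiag htri N d hdeg)
    -- replace Lprods by Qprods modulo mPow (N+1)
    have hsup : h1 ∈ Submodule.span ℂ ((fun m => Qprod Q m) '' {m | degm m = N}) ⊔ mPow r (N+1) := by
      refine Submodule.span_le.mpr ?_ hspanL
      rintro x ⟨m, hm, rfl⟩
      simp only [Set.mem_setOf_eq] at hm
      show Lprod Q m ∈ _
      have heq : Lprod Q m = Qprod Q m - (Qprod Q m - Lprod Q m) := by ring
      rw [heq]
      apply Submodule.sub_mem
      · exact Submodule.mem_sup_left (Submodule.subset_span ⟨m, hm, rfl⟩)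
      · exact Submodule.mem_sup_right (hm ▸ Qprod_sub_Lprod Q hQ0 m)
    rw [Submodule.mem_sup] at hsup
    obtain ⟨y, hy, z, hz, hyz⟩ := hsup
    refine ⟨G + y, ?_, ?_⟩
    · apply Submodule.add_mem
      · refine Submodule.span_mono (Set.image_mono ?_) hG
        intro m hm
        simp only [Set.mem_setOf_eq] at hm ⊢
        omega
      · refine Submodule.span_mono (Set.image_mono ?_) hy
        intro m hm
        simp only [Set.mem_setOf_eq] at hm ⊢
        omega
    · have : F - (G + y) = (H - h1) + z := by
        rw [hHdef, ← hyz]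
        ring
      rw [this]
      exact Submodule.add_mem _ hH1 hz

end Core2

/-! ### Left linearity of the pairing -/

lemma pair_left_zero (F : Pr) : pair (0 : Vr) F = 0 := by
  rw [pair, Finsupp.sum_zero_index]

lemma pair_left_add (c d : Vr) (F : Pr) : pair (c + d) F = pair c F + pair d F :=
  Finsupp.sum_add_index' (fun j => zero_mul _) (fun j b1 b2 => add_mul b1 b2 _)

lemma pair_left_smul (s : ℂ) (c : Vr) (F : Pr) : pair (s • c) F = s * pair c F := by
  rw [pair, Finsupp.sum_smul_index (h := fun j cj => cj * coeff (toF j) F) (fun j => zero_mul _)]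
  rw [show (c.sum fun j b => s * b * coeff (toF j) F)
      = s * c.sum fun j b => b * coeff (toF j) F by
    rw [Finsupp.mul_sum]
    exact Finsupp.sum_congr fun j _ => by ring]
  rfl

lemma pair_left_sum {ι : Type*} (s : Finset ι) (c : ι → Vr) (F : Pr) :
    pair (∑ i ∈ s, c i) F = ∑ i ∈ s, pair (c i) F := by
  classical
  induction s using Finset.induction_on with
  | empty => simp [pair_left_zero]
  | @insert _ _ h ih => rw [Finset.sum_insert h, pair_left_add, ih, Finset.sum_insert h]

lemma pair_left_sub (c d : Vr) (F : Pr) : pair (c - d) F = pair c F - pair d F := by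
  have : c - d = c + (-1 : ℂ) • d := by ring_nf; rw [neg_one_smul]; abel
  rw [this, pair_left_add, pair_left_smul]
  ring

lemma pair_sum {ι : Type*} (c : Vr) (s : Finset ι) (G : ι → Pr) :
    pair c (∑ i ∈ s, G i) = ∑ i ∈ s, pair c (G i) := by
  classical
  induction s using Finset.induction_on with
  | empty => simp [pair_zero]
  | @insert _ _ h ih => rw [Finset.sum_insert h, pair_add, ih, Finset.sum_insert h]

/-! ### The finite set of small multi-indices -/

def degLT (N : ℕ) : Finset (Fin r → ℕ) :=
  (Fintype.piFinset fun _ : Fin r => Finset.range N).filter fun m => degm m < N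

lemma mem_degLT {N : ℕ} {m : Fin r → ℕ} : m ∈ degLT (r := r) N ↔ degm m < N := by
  constructor
  · exact fun h => (Finset.mem_filter.mp h).2
  · intro h
    refine Finset.mem_filter.mpr ⟨Fintype.mem_piFinset.mpr fun i => Finset.mem_range.mpr ?_, h⟩
    have : m i ≤ degm m := Finset.single_le_sum (f := m) (fun j _ => Nat.zero_le _)
      (Finset.mem_univ i)
    omega

/-! ### Linear independence of the products modulo mPow -/

lemma independence (Q : Fin r → Pr) (hQ0 : ∀ i, coeff 0 (Q i) = 0)
    (hdiag : ∀ i, Lam Q i i ≠ 0) (htri : ∀ i j : Fin r, i < j → Lam Q i j = 0)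
    (N : ℕ) (g : {m // m ∈ degLT (r := r) N} → ℂ)
    (h : (∑ i, g i • Qprod Q i.1) ∈ mPow r N) : ∀ i, g i = 0 := by
  classical
  suffices H : ∀ k (i : {m // m ∈ degLT (r := r) N}), degm i.1 = k → g i = 0 by
    exact fun i => H (degm i.1) i rfl
  intro k
  induction k using Nat.strong_induction_on with
  | _ k IH =>
    intro i0 hi0
    have hkN : k < N := hi0 ▸ mem_degLT.mp i0.2
    have hsum : (∑ i, g i • Qprod Q i.1)
        = ∑ i ∈ Finset.univ.filter (fun i : {m // m ∈ degLT (r := r) N} => k ≤ degm i.1),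
            g i • Qprod Q i.1 := by
      symm
      apply Finset.sum_subset (Finset.filter_subset _ _)
      intro i _ hi
      rw [Finset.mem_filter, not_and] at hi
      have hlt : degm i.1 < k := by
        have := hi (Finset.mem_univ i)
        omega
      rw [IH (degm i.1) hlt i rfl, zero_smul]
    have h0 : homogeneousComponent k (∑ i, g i • Qprod Q i.1) = 0 :=
      homComp_eq_zero_of_mPow h hkN
    rw [hsum, map_sum] at h0
    have hss : Finset.univ.filter (fun i : {m // m ∈ degLT (r := r) N} => degm i.1 = k)
        ⊆ Finset.univ.filter (fun i : {m // m ∈ degLT (r := r) N} => k ≤ degm i.1) := by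
      intro i hi
      rw [Finset.mem_filter] at hi ⊢
      exact ⟨hi.1, le_of_eq hi.2.symm⟩
    have hzero : ∀ i ∈ Finset.univ.filter
        (fun i : {m // m ∈ degLT (r := r) N} => k ≤ degm i.1),
        i ∉ Finset.univ.filter (fun i : {m // m ∈ degLT (r := r) N} => degm i.1 = k) →
        homogeneousComponent k (g i • Qprod Q i.1) = 0 := by
      intro i hi hni
      rw [Finset.mem_filter] at hi hni
      have hgt : k < degm i.1 := by
        have h2 := hi.2
        have h3 : ¬ degm i.1 = k := fun hc => hni ⟨hi.1, hc⟩
        omega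
      rw [map_smul, homComp_eq_zero_of_mPow (Qprod_mem_mPow Q hQ0 i.1) hgt, smul_zero]
    have e1 : (∑ i ∈ Finset.univ.filter
          (fun i : {m // m ∈ degLT (r := r) N} => k ≤ degm i.1),
          homogeneousComponent k (g i • Qprod Q i.1))
        = ∑ i ∈ Finset.univ.filter
          (fun i : {m // m ∈ degLT (r := r) N} => degm i.1 = k),
          g i • Lprod Q i.1 := by
      rw [← Finset.sum_subset hss hzero]
      apply Finset.sum_congr rfl
      intro i hi
      rw [Finset.mem_filter] at hi
      rw [map_smul, homComp_Qprod Q hQ0 hi.2]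
    have h1 : (∑ i ∈ Finset.univ.filter
          (fun i : {m // m ∈ degLT (r := r) N} => degm i.1 = k),
          g i • Lprod Q i.1) = 0 := e1.symm.trans h0
    -- transport through the injective substitution
    have h2 : (∑ i ∈ Finset.univ.filter
          (fun i : {m // m ∈ degLT (r := r) N} => degm i.1 = k),
          g i • monomial (toF i.1) (1 : ℂ)) = 0 := by
      apply phi_injective Q hdiag htri
      rw [map_sum, map_zero]
      rw [← h1]
      apply Finset.sum_congr rfl
      intro i _
      rw [map_smul, phi_monomial]
    have hi0mem : i0 ∈ Finset.univ.filter
        (fun i : {m // m ∈ degLT (r := r) N} => degm i.1 = k) :=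
      Finset.mem_filter.mpr ⟨Finset.mem_univ _, hi0⟩
    have h3 := congrArg (coeff (toF i0.1)) h2
    rw [MvPolynomial.coeff_sum, coeff_zero] at h3
    rw [Finset.sum_eq_single i0] at h3
    · rw [MvPolynomial.coeff_smul, coeff_monomial, if_pos rfl, smul_eq_mul, mul_one] at h3
      exact h3
    · intro i _ hii
      rw [MvPolynomial.coeff_smul, coeff_monomial, if_neg, smul_eq_mul, mul_zero]
      intro hc
      exact hii (Subtype.ext (toF_inj hc))
    · intro hc
      exact absurd hi0mem hc

/-! ### Existence of the dual family -/

lemma exists_dualfam (Q : Fin r → Pr) (hQ0 : ∀ i, coeff 0 (Q i) = 0)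
    (hdiag : ∀ i, Lam Q i i ≠ 0) (htri : ∀ i j : Fin r, i < j → Lam Q i j = 0) (N : ℕ) :
    ∃ cα : (Fin r → ℕ) → Vr,
      ∀ α, degm α < N →
        (∀ j ∈ (cα α).support, degm j < N) ∧
        (∀ m : Fin r → ℕ, pair (cα α) (Qprod Q m) = if m = α then 1 else 0) := by
  classical
  set mk : Pr →ₗ[ℂ] (Pr ⧸ mPow r N) := (mPow r N).mkQ with hmk
  set fam : {m // m ∈ degLT (r := r) N} → (Pr ⧸ mPow r N) := fun m => mk (Qprod Q m.1) with hfam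
  have hli : LinearIndependent ℂ fam := by
    rw [Fintype.linearIndependent_iff]
    intro g hg
    apply independence Q hQ0 hdiag htri N g
    rw [← Submodule.Quotient.mk_eq_zero (mPow r N)]
    rw [show Submodule.Quotient.mk (∑ i, g i • Qprod Q i.1) = mk (∑ i, g i • Qprod Q i.1) from rfl]
    rw [map_sum]
    rw [show (∑ i, mk (g i • Qprod Q i.1)) = ∑ i, g i • fam i from
      Finset.sum_congr rfl fun i _ => by rw [map_smul]]
    exact hg
  have hsp : ⊤ ≤ Submodule.span ℂ (Set.range fam) := by
    rintro w -
    obtain ⟨F, rfl⟩ := Submodule.mkQ_surjective (mPow r N) w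
    obtain ⟨G, hG, hFG⟩ := spanning Q hQ0 hdiag htri N F
    have h1 : mk F = mk G := by
      rw [← sub_eq_zero, ← map_sub]
      rw [show mk (F - G) = Submodule.Quotient.mk (F - G) from rfl]
      exact (Submodule.Quotient.mk_eq_zero _).mpr hFG
    rw [show (mPow r N).mkQ F = mk F from rfl, h1]
    have h2 : mk G ∈ Submodule.map mk (Submodule.span ℂ
        ((fun m => Qprod Q m) '' {m | degm m < N})) := Submodule.mem_map_of_mem hG
    rw [Submodule.map_span] at h2
    refine Submodule.span_mono ?_ h2
    rintro x ⟨y, ⟨m, hm, rfl⟩, rfl⟩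
    exact ⟨⟨m, mem_degLT.mpr hm⟩, rfl⟩
  set b : Module.Basis {m // m ∈ degLT (r := r) N} ℂ (Pr ⧸ mPow r N) := Module.Basis.mk hli hsp with hb
  refine ⟨fun α =>
    if hα : α ∈ degLT (r := r) N then
      Finsupp.onFinset (degLT (r := r) N)
        (fun j => if j ∈ degLT (r := r) N then (b.coord ⟨α, hα⟩) (mk (monomial (toF j) 1)) else 0)
        (fun j hj => by
          by_contra hjn
          simp only [if_neg hjn] at hj
          exact hj rfl)
    else 0, ?_⟩
  intro α hαdeg
  have hα : α ∈ degLT (r := r) N := mem_degLT.mpr hαdeg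
  simp only [dif_pos hα]
  set c : Vr := Finsupp.onFinset (degLT (r := r) N)
      (fun j => if j ∈ degLT (r := r) N then (b.coord ⟨α, hα⟩) (mk (monomial (toF j) 1)) else 0)
      (fun j hj => by
        by_contra hjn
        simp only [if_neg hjn] at hj
        exact hj rfl) with hc
  have hsupp : ∀ j ∈ c.support, degm j < N := by
    intro j hj
    have := Finsupp.support_onFinset_subset hj
    exact mem_degLT.mp this
  have hsupp' : ∀ j ∈ c.support, (toF j).degree < N := by
    intro j hj
    rw [degm_toF]
    exact hsupp j hj
  -- the pairing against c agrees with the coordinate functional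
  have hpair : ∀ F : Pr, pair c F = (b.coord ⟨α, hα⟩) (mk F) := by
    have hmono : ∀ (d : Fin r →₀ ℕ) (γ : ℂ),
        pair c (monomial d γ) = (b.coord ⟨α, hα⟩) (mk (monomial d γ)) := by
      intro d γ
      by_cases hd : d.degree < N
      · rw [show (monomial d γ : Pr) = γ • monomial d 1 by
          rw [MvPolynomial.smul_monomial, smul_eq_mul, mul_one]]
        rw [pair_smul, pair_monomial, map_smul, map_smul]
        congr 1
        have hmem : Finsupp.equivFunOnFinite d ∈ degLT (r := r) N := by
          rw [mem_degLT, degm_coe]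
          exact hd
        rw [hc, Finsupp.onFinset_apply, if_pos hmem]
        rw [show toF (Finsupp.equivFunOnFinite d) = d from
          Finsupp.equivFunOnFinite.symm_apply_apply d]
      · have hmem : monomial d γ ∈ mPow r N :=
          mPow_anti (not_lt.mp hd) (monomial_mem_mPow γ)
        rw [pair_eq_zero_of_mPow hsupp' hmem]
        rw [show mk (monomial d γ) = Submodule.Quotient.mk (monomial d γ) from rfl]
        rw [(Submodule.Quotient.mk_eq_zero _).mpr hmem, map_zero]
    intro F
    conv_lhs => rw [← MvPolynomial.support_sum_monomial_coeff F]
    conv_rhs => rw [← MvPolynomial.support_sum_monomial_coeff F]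
    rw [pair_sum, map_sum, map_sum]
    exact Finset.sum_congr rfl fun d _ => hmono d (coeff d F)
  constructor
  · exact hsupp
  · intro m
    rw [hpair]
    by_cases hm : m ∈ degLT (r := r) N
    · have hfambm : mk (Qprod Q m) = b ⟨m, hm⟩ := by
        rw [hb, Module.Basis.mk_apply]
      rw [hfambm, Module.Basis.coord_apply, Module.Basis.repr_self, Finsupp.single_apply]
      by_cases hma : m = α
      · rw [if_pos (Subtype.ext hma), if_pos hma]
      · rw [if_neg (fun hc => hma (Subtype.ext_iff.mp hc)), if_neg hma]
    · have hdegm : N ≤ degm m := by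
        rw [mem_degLT] at hm
        omega
      have hmem : Qprod Q m ∈ mPow r N := mPow_anti hdegm (Qprod_mem_mPow Q hQ0 m)
      rw [show mk (Qprod Q m) = Submodule.Quotient.mk (Qprod Q m) from rfl]
      rw [(Submodule.Quotient.mk_eq_zero _).mpr hmem, map_zero]
      rw [if_neg]
      intro hc
      subst hc
      omega

/-! ### If a family pairs to zero with all Qprods it is zero -/

lemma pair_Qprod_zero (Q : Fin r → Pr) (hQ0 : ∀ i, coeff 0 (Q i) = 0)
    (hdiag : ∀ i, Lam Q i i ≠ 0) (htri : ∀ i j : Fin r, i < j → Lam Q i j = 0)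
    (c : Vr) (hall : ∀ m : Fin r → ℕ, pair c (Qprod Q m) = 0) : c = 0 := by
  apply eq_zero_of_pair
  intro F
  set N := (c.support.sup fun j => degm j) + 1 with hN
  have hbound : ∀ j ∈ c.support, (toF j).degree < N := by
    intro j hj
    rw [degm_toF]
    have h5 : degm j ≤ c.support.sup fun j => degm j := Finset.le_sup hj
    omega
  obtain ⟨G, hG, hFG⟩ := spanning Q hQ0 hdiag htri N F
  have h2 : pair c (F - G) = 0 := pair_eq_zero_of_mPow hbound hFG
  have h3 : pair c G = 0 := by
    refine Submodule.span_induction ?_ ?_ ?_ ?_ hG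
    · rintro x ⟨m, hm, rfl⟩
      exact hall m
    · exact pair_zero c
    · intro x y _ _ hx hy
      rw [pair_add, hx, hy, add_zero]
    · intro s x _ hx
      rw [pair_smul, hx, mul_zero]
  have h4 : F = (F - G) + G := by ring
  rw [h4, pair_add, h2, h3, add_zero]

/-! ### The core result: the annihilator is spanned by an explicit free family -/

theorem core (Q : Fin r → Pr) (hQ0 : ∀ i, coeff 0 (Q i) = 0)
    (hdiag : ∀ i, Lam Q i i ≠ 0) (htri : ∀ i j : Fin r, i < j → Lam Q i j = 0)
    (p : Fin r → ℕ) :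
    ∃ cfam : ((i : Fin r) → Fin (p i)) → Vr,
      LinearIndependent ℂ cfam ∧
      ∀ c : Vr, (∀ (i : Fin r) (H : Pr), pair c (H * Q i ^ p i) = 0) ↔
        c ∈ Submodule.span ℂ (Set.range cfam) := by
  classical
  set N₀ := (∑ i, p i) + 1 with hN₀
  obtain ⟨cα, hcα⟩ := exists_dualfam Q hQ0 hdiag htri N₀
  have boxdeg : ∀ α : (i : Fin r) → Fin (p i), degm (fun i => (α i : ℕ)) < N₀ := by
    intro α
    have : (∑ i, ((α i : ℕ))) ≤ ∑ i, p i :=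
      Finset.sum_le_sum fun i _ => le_of_lt (α i).isLt
    rw [degm]
    omega
  set cfam : ((i : Fin r) → Fin (p i)) → Vr := fun α => cα (fun i => (α i : ℕ)) with hcfam
  have hdual : ∀ (α : (i : Fin r) → Fin (p i)) (m : Fin r → ℕ),
      pair (cfam α) (Qprod Q m) = if m = (fun i => (α i : ℕ)) then 1 else 0 := by
    intro α m
    exact (hcα _ (boxdeg α)).2 m
  have hsupp : ∀ (α : (i : Fin r) → Fin (p i)) (j : Fin r → ℕ),
      j ∈ (cfam α).support → degm j < N₀ :=
    fun α => (hcα _ (boxdeg α)).1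
  have coe_inj : ∀ α β : (i : Fin r) → Fin (p i),
      (fun i => (α i : ℕ)) = (fun i => (β i : ℕ)) → α = β := by
    intro α β h
    funext i
    exact Fin.ext (congrFun h i)
  -- the generators annihilate
  have hgen : ∀ (α : (i : Fin r) → Fin (p i)) (i : Fin r) (H : Pr),
      pair (cfam α) (H * Q i ^ p i) = 0 := by
    intro α i H
    obtain ⟨G, hG, hHG⟩ := spanning Q hQ0 hdiag htri N₀ H
    have hsplit : H * Q i ^ p i = G * Q i ^ p i + (H - G) * Q i ^ p i := by ring
    rw [hsplit, pair_add]
    have hb1 : pair (cfam α) ((H - G) * Q i ^ p i) = 0 := by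
      apply pair_eq_zero_of_mPow (N := N₀)
      · intro j hj
        rw [degm_toF]
        exact hsupp α j hj
      · have := mul_mem_mPow hHG (pow_mem_mPow (Q_mem_mPow Q hQ0 i) (p i))
        exact mPow_anti (by omega) this
    have hb2 : pair (cfam α) (G * Q i ^ p i) = 0 := by
      refine Submodule.span_induction ?_ ?_ ?_ ?_ hG
      · rintro x ⟨m, hm, rfl⟩
        show pair (cfam α) (Qprod Q m * Q i ^ p i) = 0
        rw [← Qprod_en Q i (p i), Qprod_mul, hdual]
        rw [if_neg]
        intro hc
        have h6 := congrFun hc i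
        simp [en] at h6
        have hlt := (α i).isLt
        omega
      · rw [zero_mul, pair_zero]
      · intro x y _ _ hx hy
        rw [add_mul, pair_add, hx, hy, add_zero]
      · intro s x _ hx
        rw [smul_mul_assoc, pair_smul, hx, mul_zero]
    rw [hb1, hb2, add_zero]
  refine ⟨cfam, ?_, ?_⟩
  · rw [Fintype.linearIndependent_iff]
    intro g hg α₀
    have h1 := congrArg (fun v => pair v (Qprod Q (fun i => (α₀ i : ℕ)))) hg
    rw [pair_left_sum, pair_left_zero] at h1
    rw [Finset.sum_eq_single α₀] at h1
    · rw [pair_left_smul, hdual, if_pos rfl, mul_one] at h1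
      exact h1
    · intro α _ hα
      rw [pair_left_smul, hdual, if_neg, mul_zero]
      intro hc
      exact hα (coe_inj _ _ hc.symm)
    · intro hc
      exact absurd (Finset.mem_univ α₀) hc
  · intro c
    constructor
    · -- annihilator is contained in the span
      intro hc
      set Nc := max N₀ ((c.support.sup fun j => degm j) + 1) with hNc
      obtain ⟨cβ, hcβ⟩ := exists_dualfam Q hQ0 hdiag htri Nc
      have boxdegc : ∀ α : (i : Fin r) → Fin (p i), degm (fun i => (α i : ℕ)) < Nc :=
        fun α => lt_of_lt_of_le (boxdeg α) (le_max_left _ _)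
      -- c pairs to zero against Qprod m whenever m is outside the box
      have hout : ∀ m : Fin r → ℕ, (∃ i, p i ≤ m i) → pair c (Qprod Q m) = 0 := by
        rintro m ⟨i, hi⟩
        set m' : Fin r → ℕ := fun j => if j = i then m j - p i else m j with hm'
        have hmm : m' + en i (p i) = m := by
          funext j
          simp only [Pi.add_apply, hm', en]
          by_cases hji : j = i
          · subst hji
            simp
            omega
          · simp [hji]
        rw [← hmm, ← Qprod_mul, Qprod_en]
        exact hc i (Qprod Q m')
      set e : Vr := c - ∑ α : (i : Fin r) → Fin (p i),
          (pair c (Qprod Q (fun i => (α i : ℕ)))) • cβ (fun i => (α i : ℕ)) with he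
      have hezero : e = 0 := by
        apply pair_Qprod_zero Q hQ0 hdiag htri
        intro m
        rw [he, pair_left_sub, pair_left_sum]
        have hterm : ∀ α : (i : Fin r) → Fin (p i),
            pair ((pair c (Qprod Q (fun i => (α i : ℕ)))) • cβ (fun i => (α i : ℕ)))
              (Qprod Q m)
            = (pair c (Qprod Q (fun i => (α i : ℕ)))) *
                (if m = (fun i => (α i : ℕ)) then 1 else 0) := by
          intro α
          rw [pair_left_smul, (hcβ _ (boxdegc α)).2 m]
        rw [Finset.sum_congr rfl fun α _ => hterm α]
        by_cases hbox : ∀ i, m i < p i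
        · set α₀ : (i : Fin r) → Fin (p i) := fun i => ⟨m i, hbox i⟩ with hα₀
          have hm0 : m = fun i => ((α₀ i : ℕ)) := by
            funext i
            rfl
          rw [Finset.sum_eq_single α₀]
          · rw [if_pos hm0, mul_one, ← hm0, sub_self]
          · intro α _ hα
            rw [if_neg, mul_zero]
            intro hcx
            exact hα (coe_inj _ _ (hcx.symm.trans hm0))
          · intro hcx
            exact absurd (Finset.mem_univ α₀) hcx
        · push_neg at hbox
          obtain ⟨i, hi⟩ := hbox
          rw [hout m ⟨i, hi⟩]
          rw [Finset.sum_eq_zero, sub_zero]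
          intro α _
          rw [if_neg, mul_zero]
          intro hcx
          have := congrFun hcx i
          have hlt := (α i).isLt
          omega
      have hrepr : c = ∑ α : (i : Fin r) → Fin (p i),
          (pair c (Qprod Q (fun i => (α i : ℕ)))) • cβ (fun i => (α i : ℕ)) := by
        have := sub_eq_zero.mp hezero
        exact this
      -- the two dual families agree on the box
      have hβα : ∀ α : (i : Fin r) → Fin (p i),
          cβ (fun i => (α i : ℕ)) = cfam α := by
        intro α
        have hz : cβ (fun i => (α i : ℕ)) - cfam α = 0 := by
          apply pair_Qprod_zero Q hQ0 hdiag htri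
          intro m
          rw [pair_left_sub, (hcβ _ (boxdegc α)).2 m, hdual, sub_self]
        exact sub_eq_zero.mp hz
      rw [hrepr]
      apply Submodule.sum_mem
      intro α _
      rw [hβα α]
      exact Submodule.smul_mem _ _ (Submodule.subset_span ⟨α, rfl⟩)
    · -- the span is contained in the annihilator
      intro hc i H
      refine Submodule.span_induction ?_ ?_ ?_ ?_ hc
      · rintro x ⟨α, rfl⟩
        exact hgen α i H
      · exact pair_left_zero _
      · intro x y _ _ hx hy
        rw [pair_left_add, hx, hy, add_zero]
      · intro s x _ hx
        rw [pair_left_smul, hx, mul_zero]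

lemma dual_sum_eq_pair (a : Fin r → ℂ) (c : Vr) (F : Pr) :
    (c.sum fun j cj => cj * diffFunc a j F) = pair c (τ a F) :=
  Finsupp.sum_congr fun j _ => by rw [diffFunc_eq_coeff_τ]

lemma eval_zero_eq_coeff_zero (G : Pr) : eval (0 : Fin r → ℂ) G = coeff 0 G := by
  rw [eval_zero]
  rfl

end DualProof

/-- Corollary `cor:mult`, dual-space form.  Let
`B₁,…,B_r ∈ ℂ[x₁,…,x_r]` with each `B_i` involving only `x₁,…,x_i`, let `p₁,…,p_r`
be positive integers, and let `a ∈ ℂ^r` satisfy `B_i(a) = 0` and `(∂B_i/∂x_i)(a) ≠ 0`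
for all `i`.  Let `I = ⟨B₁^{p₁},…,B_r^{p_r}⟩`.  Then the dual space `D_a(I)` has
dimension exactly `p₁⋯p_r` over `ℂ`. -/
theorem finrank_dualSpace_eq_prod {r : ℕ}
    (B : Fin r → MvPolynomial (Fin r) ℂ)
    (hBvars : ∀ i : Fin r, ∀ k ∈ (B i).vars, k ≤ i)
    (p : Fin r → ℕ) (hp : ∀ i, 0 < p i)
    (a : Fin r → ℂ)
    (hBa : ∀ i, eval a (B i) = 0)
    (hB' : ∀ i, eval a (pderiv i (B i)) ≠ 0)
    (I : Ideal (MvPolynomial (Fin r) ℂ))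
    (hI : I = Ideal.span (Set.range fun i => B i ^ p i)) :
    Module.finrank ℂ (dualSpace a I) = ∏ i, p i := by
  classical
  open DualProof in
  set Q : Fin r → MvPolynomial (Fin r) ℂ := fun i => τ a (B i) with hQ
  -- the three structural hypotheses for the translated system
  have hQ0 : ∀ i, coeff 0 (Q i) = 0 := by
    intro i
    rw [← eval_zero_eq_coeff_zero, hQ, eval_zero_τ]
    exact hBa i
  have hcoeff_single : ∀ (G : MvPolynomial (Fin r) ℂ) (j : Fin r),
      coeff (Finsupp.single j 1) G = coeff 0 (pderiv j G) := by
    intro G j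
    rw [coeff_pderiv]
    simp
  have hdiag : ∀ i, Lam Q i i ≠ 0 := by
    intro i
    rw [Lam, hcoeff_single, ← eval_zero_eq_coeff_zero, hQ, pderiv_τ, eval_zero_τ]
    exact hB' i
  have htri : ∀ i j : Fin r, i < j → Lam Q i j = 0 := by
    intro i j hij
    rw [Lam, hcoeff_single, ← eval_zero_eq_coeff_zero, hQ, pderiv_τ, eval_zero_τ]
    have hnv : j ∉ (B i).vars := by
      intro hv
      exact absurd (hBvars i j hv) (not_le.mpr hij)
    rw [pderiv_eq_zero_of_notMem_vars hnv, map_zero]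
  obtain ⟨cfam, hli, hiff⟩ := core Q hQ0 hdiag htri p
  -- identify the dual space with the span of the family
  have hDS : dualSpace a I = Submodule.span ℂ (Set.range cfam) := by
    ext c
    rw [← hiff c]
    constructor
    · intro hc i H
      have hmem : τ (-a) H * B i ^ p i ∈ I := by
        rw [hI]
        exact Ideal.mul_mem_left _ _ (Ideal.subset_span ⟨i, rfl⟩)
      have h1 := hc _ hmem
      rw [dual_sum_eq_pair, map_mul, map_pow] at h1
      have h2 : τ a (τ (-a) H) = H := by
        rw [← AlgHom.comp_apply, τ_comp]
        simp [τ_zero]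
      rw [h2] at h1
      exact h1
    · intro hc F hF
      rw [dual_sum_eq_pair]
      rw [hI] at hF
      have key : ∀ H : MvPolynomial (Fin r) ℂ, pair c (H * τ a F) = 0 := by
        refine Submodule.span_induction ?_ ?_ ?_ ?_ hF
        · rintro x ⟨i, rfl⟩
          intro H
          rw [map_pow]
          exact hc i H
        · intro H
          rw [map_zero, mul_zero, pair_zero]
        · intro x y _ _ hx hy H
          rw [map_add, mul_add, pair_add, hx, hy, add_zero]
        · intro s x _ hx H
          rw [smul_eq_mul, map_mul, ← mul_assoc]
          exact hx (H * τ a s)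
      have := key 1
      rwa [one_mul] at this
  rw [hDS, finrank_span_eq_card hli]
  simp
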